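/- Fix real λ and real η and set v₀ = −λ² − λ − η², ε₁ = v₀/2, ε₂ = η(3v₀+1)/4. For ρ₀ > 0 define ε = ε₁/ρ₀ + ε₂/ρ₀², δ = ε − η·ln(1 + ε/ρ₀), and ρ = ρ₀ + ε. Then sin(δ)·Σ_{k=0}^{2} p_k/(2ρ)^k + cos(δ)·Σ_{k=0}^{2} q_k/(2ρ)^k = O(ρ₀^{−3}) as ρ₀ → ∞, where (p_k), (q_k) are defined by p₀ = 1, q₀ = 0, and for k ≥ 0, (k+1)·p_{k+1} = u_k·p_k + v_k·q_k and (k+1)·q_{k+1} = −v_k·p_k + u_k·q_k with u_k = η(2k+1), v_k = k + k² − λ² − λ − η². -/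

import Mathlib

open Real Filter Asymptotics Topology

set_option maxHeartbeats 2000000

/-! Auxiliary definitions -/

noncomputable def cE (η v0 x : ℝ) : ℝ := v0 / 2 / x + η * (3 * v0 + 1) / 4 / x ^ 2

noncomputable def cD (η v0 x : ℝ) : ℝ := cE η v0 x - η * Real.log (1 + cE η v0 x / x)

noncomputable def cR (η v0 x : ℝ) : ℝ := x + cE η v0 x

noncomputable def gp (n : ℕ) : ℝ → ℝ := fun x => (x ^ n)⁻¹

noncomputable def cG (η v0 t : ℝ) : ℝ :=
  (v0^2/2 - v0^3/4 - η^2/2 - 7/4*η^2*v0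
   + (5/4*η*v0 + 21/8*η*v0^2 - 1/8*η*v0^3 - 1/8*η^3 - 9/8*η^3*v0) * t
   + (1/2*v0^3 + 1/2*η^2 + 7/4*η^2*v0 + 3/8*η^2*v0^2 + 3/8*η^2*v0^3 - 3/8*η^4 - 9/8*η^4*v0) * t^2
   + (3/4*η*v0^2 + 7/4*η*v0^3 - 3/8*η^3 - 11/4*η^3*v0 - 39/8*η^3*v0^2) * t^3
   + (3/8*η^2*v0 + 3/2*η^2*v0^2 + 9/8*η^2*v0^3 - 1/8*η^4 - 3/4*η^4*v0 - 9/8*η^4*v0^2) * t^4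
   + (1/16*η^3 + 3/16*η^3*v0 - 9/16*η^3*v0^2 - 27/16*η^3*v0^3) * t^5
   + (-1/16*η^4 - 9/16*η^4*v0 - 27/16*η^4*v0^2 - 27/16*η^4*v0^3) * t^6)
  / (4*(1 + v0/2*t^2 + η*(3*v0+1)/4*t^3)^2)

/-! Auxiliary lemmas -/

lemma gp_le {a b : ℕ} (h : a ≤ b) : gp b =O[atTop] gp a := by
  apply IsBigO.of_bound'
  filter_upwards [eventually_ge_atTop (1:ℝ)] with x hx
  have hx0 : (0:ℝ) < x := lt_of_lt_of_le one_pos hx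
  simp only [gp, Real.norm_eq_abs, abs_inv, abs_of_pos (pow_pos hx0 _)]
  exact inv_anti₀ (pow_pos hx0 a) (pow_le_pow_right₀ hx h)

lemma gp_tendsto {n : ℕ} (hn : n ≠ 0) : Tendsto (gp n) atTop (𝓝 0) :=
  tendsto_inv_atTop_zero.comp (tendsto_pow_atTop hn)

lemma isBigO_gp_of_tendsto {h : ℝ → ℝ} {c : ℝ} {n : ℕ}
    (ht : Tendsto (fun x => h x * x ^ n) atTop (𝓝 c)) : h =O[atTop] gp n := by
  have h1 : (fun x => h x * x ^ n) =O[atTop] (fun _ : ℝ => (1:ℝ)) := ht.isBigO_one ℝ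
  have h2 := h1.mul (isBigO_refl (gp n) atTop)
  refine h2.congr' ?_ (Eventually.of_forall fun x => one_mul _)
  filter_upwards [eventually_gt_atTop (0:ℝ)] with x hx
  simp only [gp]
  rw [mul_assoc, mul_inv_cancel₀ (pow_ne_zero _ hx.ne'), mul_one]

lemma ev_abs_le {f : ℝ → ℝ} (h : Tendsto f atTop (𝓝 0)) {c : ℝ} (hc : 0 < c) :
    ∀ᶠ x in atTop, |f x| ≤ c := by
  filter_upwards [Metric.tendsto_nhds.mp h c hc] with x hx
  rw [Real.dist_eq, sub_zero] at hx
  exact hx.le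

lemma aux_sin {x : ℝ} (h0 : 0 ≤ x) (h1 : x ≤ 1) : |Real.sin x - x| ≤ x ^ 3 := by
  rcases eq_or_lt_of_le h0 with rfl | hx
  · simp
  · have hs1 := Real.sin_lt hx
    have hs2 := Real.sin_gt_sub_cube hx
    have hx3 : 0 ≤ x ^ 3 := by positivity
    exact abs_le.mpr ⟨by nlinarith, by nlinarith⟩

lemma abs_sin_sub {x : ℝ} (h : |x| ≤ 1) : |Real.sin x - x| ≤ |x| ^ 3 := by
  rcases le_or_gt 0 x with hx | hx
  · rw [abs_of_nonneg hx]
    exact aux_sin hx (by rwa [abs_of_nonneg hx] at h)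
  · have h2 := aux_sin (x := -x) (by linarith) (by rwa [abs_of_neg hx] at h)
    rw [Real.sin_neg] at h2
    have h3 : -Real.sin x - -x = -(Real.sin x - x) := by ring
    rw [h3, abs_neg] at h2
    rwa [abs_of_neg hx]

lemma abs_cos_sub (x : ℝ) : |Real.cos x - 1| ≤ x ^ 2 := by
  have h1 := Real.cos_le_one x
  have h2 := Real.one_sub_sq_div_two_le_cos (x := x)
  have h3 : 0 ≤ x ^ 2 := sq_nonneg x
  exact abs_le.mpr ⟨by nlinarith, by nlinarith⟩

lemma abs_log_sub {y : ℝ} (h : |y| ≤ 1/2) : |Real.log (1 + y) - y| ≤ 2 * y ^ 2 := by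
  have h1 : |(-y)| < 1 := by rw [abs_neg]; linarith [abs_nonneg y]
  have h2 := Real.abs_log_sub_add_sum_range_le h1 1
  have e1 : (∑ i ∈ Finset.range 1, (-y) ^ (i + 1) / ((i : ℝ) + 1)) = -y := by
    simp
  rw [e1, abs_neg] at h2
  have e2 : 1 - -y = 1 + y := by ring
  rw [e2] at h2
  have e3 : -y + Real.log (1 + y) = Real.log (1 + y) - y := by ring
  rw [e3] at h2
  refine h2.trans ?_
  have hy2 : |y| ^ 2 = y ^ 2 := sq_abs y
  have hpos : (0:ℝ) < 1 - |y| := by linarith [abs_nonneg y]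
  rw [div_le_iff₀ hpos, hy2]
  nlinarith [sq_nonneg y, abs_nonneg y, sq_abs y]

lemma abs_log_le {y : ℝ} (h : |y| ≤ 1/2) : |Real.log (1 + y)| ≤ 2 * |y| := by
  have h1 := abs_log_sub h
  have h2 := abs_sub_abs_le_abs_sub (Real.log (1 + y)) y
  nlinarith [sq_abs y, abs_nonneg y]

/-! The key asymptotic lemma -/

lemma key (η v0 : ℝ) :
    (fun x : ℝ => Real.sin (cD η v0 x) *
        (1 + η / (2 * cR η v0 x) + (3 * η ^ 2 - v0 * (v0 + 2)) / 2 / (2 * cR η v0 x) ^ 2) +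
      Real.cos (cD η v0 x) *
        (-v0 / (2 * cR η v0 x) + -(η * (2 * v0 + 1)) / (2 * cR η v0 x) ^ 2))
    =O[atTop] gp 3 := by
  -- bound on cE
  have hE : cE η v0 =O[atTop] gp 1 := by
    have hE1 : (fun x : ℝ => v0 / 2 / x) =O[atTop] gp 1 :=
      ((isBigO_refl (gp 1) atTop).const_mul_left (v0 / 2)).congr_left fun x => by
        simp only [gp, pow_one]; ring
    have hE2 : (fun x : ℝ => η * (3 * v0 + 1) / 4 / x ^ 2) =O[atTop] gp 2 :=
      ((isBigO_refl (gp 2) atTop).const_mul_left (η * (3 * v0 + 1) / 4)).congr_left fun x => by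
        simp only [gp]; ring
    exact (hE1.add (hE2.trans (gp_le one_le_two))).congr_left fun x => by simp only [cE]
  have hE0 : Tendsto (cE η v0) atTop (𝓝 0) := hE.trans_tendsto (gp_tendsto one_ne_zero)
  -- bound on cE x / x
  have hY : (fun x => cE η v0 x / x) =O[atTop] gp 2 := by
    have := hE.mul (isBigO_refl (gp 1) atTop)
    exact this.congr (fun x => by simp only [gp, pow_one]; ring)
      (fun x => by simp only [gp]; ring)
  have hY0 : Tendsto (fun x => cE η v0 x / x) atTop (𝓝 0) :=
    hY.trans_tendsto (gp_tendsto two_ne_zero)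
  have hevY : ∀ᶠ x in atTop, |cE η v0 x / x| ≤ 1/2 := ev_abs_le hY0 (by norm_num)
  -- bound on the log term
  have hLog : (fun x => Real.log (1 + cE η v0 x / x)) =O[atTop] gp 2 := by
    refine (IsBigO.of_bound 2 ?_).trans hY
    filter_upwards [hevY] with x hx
    rw [Real.norm_eq_abs, Real.norm_eq_abs]
    exact abs_log_le hx
  -- bound on cD
  have hD : cD η v0 =O[atTop] gp 1 := by
    have := hE.sub ((hLog.const_mul_left η).trans (gp_le one_le_two))
    exact this.congr_left fun x => by simp only [cD]
  have hD0 : Tendsto (cD η v0) atTop (𝓝 0) := hD.trans_tendsto (gp_tendsto one_ne_zero)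
  have hevD : ∀ᶠ x in atTop, |cD η v0 x| ≤ 1 := ev_abs_le hD0 one_pos
  have hD3 : (fun x => cD η v0 x ^ 3) =O[atTop] gp 3 := by
    have := (hD.mul hD).mul hD
    exact this.congr (fun x => by ring) (fun x => by simp only [gp]; ring)
  have hD2 : (fun x => cD η v0 x ^ 2) =O[atTop] gp 2 :=
    (hD.mul hD).congr (fun x => by ring) (fun x => by simp only [gp]; ring)
  -- sin and cos remainders
  have hsin : (fun x => Real.sin (cD η v0 x) - cD η v0 x) =O[atTop] gp 3 := by
    refine (IsBigO.of_bound' ?_).trans hD3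
    filter_upwards [hevD] with x hx
    rw [Real.norm_eq_abs, Real.norm_eq_abs, abs_pow]
    exact abs_sin_sub hx
  have hcos : (fun x => Real.cos (cD η v0 x) - 1) =O[atTop] gp 2 := by
    refine (IsBigO.of_bound' ?_).trans hD2
    refine Eventually.of_forall fun x => ?_
    rw [Real.norm_eq_abs, Real.norm_eq_abs, abs_pow, sq_abs]
    exact abs_cos_sub _
  -- log remainder
  have hLY : (fun x => Real.log (1 + cE η v0 x / x) - cE η v0 x / x) =O[atTop] gp 3 := by
    have hY2 : (fun x => (cE η v0 x / x) ^ 2) =O[atTop] gp 4 :=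
      (hY.mul hY).congr (fun x => by ring) (fun x => by simp only [gp]; ring)
    refine ((IsBigO.of_bound 2 ?_).trans hY2).trans (gp_le (by norm_num))
    filter_upwards [hevY] with x hx
    rw [Real.norm_eq_abs, Real.norm_eq_abs, abs_of_nonneg (sq_nonneg (cE η v0 x / x))]
    exact abs_log_sub hx
  -- bound on w = (2 cR)⁻¹
  have hevE : ∀ᶠ x in atTop, |cE η v0 x| ≤ 1 := ev_abs_le hE0 one_pos
  have hW : (fun x => (2 * cR η v0 x)⁻¹) =O[atTop] gp 1 := by
    apply IsBigO.of_bound'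
    filter_upwards [hevE, eventually_ge_atTop (2:ℝ)] with x h1 h2
    have hx0 : (0:ℝ) < x := by linarith
    have hcElb : -1 ≤ cE η v0 x := by linarith [(abs_le.mp h1).1]
    have hR : x / 2 ≤ cR η v0 x := by simp only [cR]; linarith
    have hRpos : 0 < cR η v0 x := by linarith
    have h2R : 0 < 2 * cR η v0 x := by linarith
    simp only [gp, pow_one, Real.norm_eq_abs, abs_inv, abs_of_pos h2R, abs_of_pos hx0]
    exact inv_anti₀ hx0 (by linarith)
  -- the sums S_p, S_q
  have hone : (fun _ : ℝ => (1:ℝ)) =O[atTop] gp 0 :=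
    (isBigO_refl _ _).congr_right fun x => by simp [gp]
  have hw1 : (fun x => η / (2 * cR η v0 x)) =O[atTop] gp 1 :=
    (hW.const_mul_left η).congr_left fun x => by ring
  have hw2 : (fun x => (3 * η ^ 2 - v0 * (v0 + 2)) / 2 / (2 * cR η v0 x) ^ 2) =O[atTop] gp 2 := by
    have := ((hW.mul hW).const_mul_left ((3 * η ^ 2 - v0 * (v0 + 2)) / 2))
    exact this.congr (fun x => by ring) (fun x => by simp only [gp]; ring)
  have hw1' : (fun x => -v0 / (2 * cR η v0 x)) =O[atTop] gp 1 :=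
    (hW.const_mul_left (-v0)).congr_left fun x => by ring
  have hw2' : (fun x => -(η * (2 * v0 + 1)) / (2 * cR η v0 x) ^ 2) =O[atTop] gp 2 := by
    have := ((hW.mul hW).const_mul_left (-(η * (2 * v0 + 1))))
    exact this.congr (fun x => by ring) (fun x => by simp only [gp]; ring)
  have hSp : (fun x => 1 + η / (2 * cR η v0 x) +
      (3 * η ^ 2 - v0 * (v0 + 2)) / 2 / (2 * cR η v0 x) ^ 2) =O[atTop] gp 0 :=
    (hone.add (hw1.trans (gp_le (Nat.zero_le 1)))).add (hw2.trans (gp_le (Nat.zero_le 2)))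
  have hSq : (fun x => -v0 / (2 * cR η v0 x) + -(η * (2 * v0 + 1)) / (2 * cR η v0 x) ^ 2)
      =O[atTop] gp 1 :=
    hw1'.add (hw2'.trans (gp_le one_le_two))
  -- the main rational part
  have hMain : (fun x => (cE η v0 x - η * (cE η v0 x / x)) *
      (1 + η / (2 * cR η v0 x) + (3 * η ^ 2 - v0 * (v0 + 2)) / 2 / (2 * cR η v0 x) ^ 2) +
      (-v0 / (2 * cR η v0 x) + -(η * (2 * v0 + 1)) / (2 * cR η v0 x) ^ 2)) =O[atTop] gp 3 := by
    apply isBigO_gp_of_tendsto (c := cG η v0 0)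
    have hGc : ContinuousAt (cG η v0) 0 := by
      apply ContinuousAt.div (by fun_prop) (by fun_prop)
      norm_num [cG]
    have hcomp : Tendsto (fun x : ℝ => cG η v0 x⁻¹) atTop (𝓝 (cG η v0 0)) :=
      hGc.tendsto.comp tendsto_inv_atTop_zero
    refine Tendsto.congr' ?_ hcomp
    filter_upwards [hevE, eventually_ge_atTop (2:ℝ)] with x h1 h2
    have hx0 : (0:ℝ) < x := by linarith
    have hcElb : -1 ≤ cE η v0 x := by linarith [(abs_le.mp h1).1]
    have hRpos : 0 < cR η v0 x := by simp only [cR]; linarith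
    have hRne : x + (v0 / 2 / x + η * (3 * v0 + 1) / 4 / x ^ 2) ≠ 0 := by
      simpa only [cR, cE] using hRpos.ne'
    have hKeq : 4*x^3 + 2*v0*x + η*(3*v0+1) = 4*x^2 * cR η v0 x := by
      simp only [cR, cE]
      field_simp
      ring
    have hKpos : 0 < 4*x^3 + 2*v0*x + η*(3*v0+1) := by
      rw [hKeq]
      exact mul_pos (by positivity) hRpos
    have hEeq : cE η v0 x = (2*v0*x + η*(3*v0+1))/(4*x^2) := by
      simp only [cE]
      field_simp
      ring
    have hReq : cR η v0 x = (4*x^3 + 2*v0*x + η*(3*v0+1))/(4*x^2) := by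
      simp only [cR, hEeq]
      field_simp
      ring
    have h2R : 2 * cR η v0 x = (4*x^3 + 2*v0*x + η*(3*v0+1))/(2*x^2) := by
      rw [hReq]; ring
    have hB : 1 + v0 / 2 * x⁻¹ ^ 2 + η * (3 * v0 + 1) / 4 * x⁻¹ ^ 3
        = (4*x^3 + 2*v0*x + η*(3*v0+1))/(4*x^3) := by
      field_simp
      ring
    simp only [cG]
    rw [eq_comm, hEeq, h2R, hB]
    simp only [div_div_eq_mul_div, div_pow]
    generalize hK : 4*x^3 + 2*v0*x + η*(3*v0+1) = K at hKpos ⊢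
    field_simp [hx0.ne', hKpos.ne']
    subst hK
    ring
  -- decomposition
  have hA : (fun x => (Real.sin (cD η v0 x) - cD η v0 x) *
      (1 + η / (2 * cR η v0 x) + (3 * η ^ 2 - v0 * (v0 + 2)) / 2 / (2 * cR η v0 x) ^ 2))
      =O[atTop] gp 3 :=
    (hsin.mul hSp).congr_right fun x => by simp only [gp]; ring
  have hB : (fun x => (Real.cos (cD η v0 x) - 1) *
      (-v0 / (2 * cR η v0 x) + -(η * (2 * v0 + 1)) / (2 * cR η v0 x) ^ 2)) =O[atTop] gp 3 :=
    (hcos.mul hSq).congr_right fun x => by simp only [gp]; ring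
  have hC : (fun x => (-η * (Real.log (1 + cE η v0 x / x) - cE η v0 x / x)) *
      (1 + η / (2 * cR η v0 x) + (3 * η ^ 2 - v0 * (v0 + 2)) / 2 / (2 * cR η v0 x) ^ 2))
      =O[atTop] gp 3 :=
    ((hLY.const_mul_left (-η)).mul hSp).congr_right fun x => by simp only [gp]; ring
  have htotal := ((hA.add hB).add hC).add hMain
  refine htotal.congr_left fun x => ?_
  simp only [cD]
  ring

theorem coulomb_mcmahon_second_order (lam η v0 ε₁ ε₂ : ℝ)
    (hv0 : v0 = -lam ^ 2 - lam - η ^ 2)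
    (hε₁ : ε₁ = v0 / 2) (hε₂ : ε₂ = η * (3 * v0 + 1) / 4)
    (p q : ℕ → ℝ) (hp0 : p 0 = 1) (hq0 : q 0 = 0)
    (hp : ∀ k : ℕ, ((k : ℝ) + 1) * p (k + 1) =
      η * (2 * (k : ℝ) + 1) * p k +
        ((k : ℝ) + (k : ℝ) ^ 2 - lam ^ 2 - lam - η ^ 2) * q k)
    (hq : ∀ k : ℕ, ((k : ℝ) + 1) * q (k + 1) =
      -((k : ℝ) + (k : ℝ) ^ 2 - lam ^ 2 - lam - η ^ 2) * p k +
        η * (2 * (k : ℝ) + 1) * q k) :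
    (fun ρ₀ : ℝ =>
        let ε : ℝ := ε₁ / ρ₀ + ε₂ / ρ₀ ^ 2
        let δ : ℝ := ε - η * Real.log (1 + ε / ρ₀)
        let ρ : ℝ := ρ₀ + ε
        Real.sin δ * (∑ k ∈ Finset.range 3, p k / (2 * ρ) ^ k) +
          Real.cos δ * (∑ k ∈ Finset.range 3, q k / (2 * ρ) ^ k))
      =O[atTop] fun ρ₀ : ℝ => ρ₀ ^ (-3 : ℤ) := by
  subst hv0 hε₁ hε₂
  -- values of the recursion
  have hp1v : p 1 = η := by
    have h := hp 0
    push_cast at h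
    rw [hp0, hq0] at h
    linarith
  have hq1v : q 1 = lam ^ 2 + lam + η ^ 2 := by
    have h := hq 0
    push_cast at h
    rw [hp0, hq0] at h
    linarith
  have hp2v : p 2 = (3 * η ^ 2 - (-lam ^ 2 - lam - η ^ 2) * ((-lam ^ 2 - lam - η ^ 2) + 2)) / 2 := by
    have h := hp 1
    push_cast at h
    rw [hp1v, hq1v] at h
    linarith
  have hq2v : q 2 = -(η * (2 * (-lam ^ 2 - lam - η ^ 2) + 1)) := by
    have h := hq 1
    push_cast at h
    rw [hp1v, hq1v] at h
    linarith
  refine (key η (-lam ^ 2 - lam - η ^ 2)).congr'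
    (Eventually.of_forall fun x => ?_) (Eventually.of_forall fun x => ?_)
  · show _ = Real.sin _ * (∑ k ∈ Finset.range 3, p k / _ ^ k) +
      Real.cos _ * (∑ k ∈ Finset.range 3, q k / _ ^ k)
    simp only [Finset.sum_range_succ, Finset.sum_range_zero, pow_zero, pow_one, div_one,
      zero_add, hp0, hq0, hp1v, hq1v, hp2v, hq2v, cD, cE, cR]
    ring
  · simp only [gp]
    rw [zpow_neg]
    norm_cast
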